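/- arXiv:2506.18694 — 2 statements merged into one kernel-verified Lean document; each statement's English description precedes it below -/
import Mathlib

section
/- Let H be a finite-dimensional complex Hilbert space, S : H → H skew-adjoint, k ≥ 1 real, and suppose a sequence e_n ∈ H satisfies e_{n+1} = ((k-1)/(k+1)) (kI + S)⁻¹ (kI - S) e_n. Then after m·⌈k⌉ steps (m a positive integer), ‖e_{m⌈k⌉}‖ ≤ exp(-m) · ‖e_0‖. -/
/-! Skew-adjointness of `S` makes the Cayley transform `(k + S)⁻¹ (k - S)` an isometry, so every
step multiplies `‖e n‖` by exactly `r = (k - 1) / (k + 1)`. Since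
`r = 1 - 2 / (k + 1) ≤ exp (-2 / (k + 1))` and `k + 1 ≤ 2 ⌈k⌉`, this gives `r ^ (m ⌈k⌉) ≤ exp (-m)`. -/

open RCLike

section SkewAdjoint

variable {𝕜 H : Type*} [RCLike 𝕜] [NormedAddCommGroup H] [InnerProductSpace 𝕜 H]
  {S : H →ₗ[𝕜] H}

lemma re_inner_apply_self_eq_zero_of_skew (hS : ∀ x y : H, inner 𝕜 (S x) y = -inner 𝕜 x (S y))
    (z : H) : re (inner 𝕜 (S z) z) = 0 := by
  have h := congrArg re (hS z z)
  rw [map_neg, ← inner_conj_symm z (S z), conj_re] at h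
  linarith

lemma re_inner_add_sub_self (x y : H) : re (inner 𝕜 (x + y) (x - y)) = ‖x‖ ^ 2 - ‖y‖ ^ 2 := by
  simp only [inner_add_left, inner_sub_right, map_add, map_sub, inner_self_eq_norm_sq,
    ← inner_conj_symm x y, conj_re]
  ring

/-- Pairing `k (y - x) = -S (y + x)` with `y + x` gives `k (‖y‖² - ‖x‖²) = -re ⟪y + x, S (y + x)⟫`,
which vanishes by skew-adjointness. -/
lemma norm_eq_of_smul_add_apply_eq_smul_sub_apply
    (hS : ∀ x y : H, inner 𝕜 (S x) y = -inner 𝕜 x (S y)) {k : ℝ} (hk : k ≠ 0) {x y : H}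
    (h : (k : 𝕜) • y + S y = (k : 𝕜) • x - S x) : ‖y‖ = ‖x‖ := by
  have hdiff : (k : 𝕜) • (y - x) = -S (y + x) := by
    rw [smul_sub, map_add]; linear_combination (norm := module) h
  have hre : re (inner 𝕜 (y + x) (y - x)) = 0 := by
    have h' := congrArg re (congrArg (inner 𝕜 (y + x)) hdiff)
    rwa [inner_smul_right, inner_neg_right, ← inner_conj_symm (y + x) (S (y + x)), map_neg,
      conj_re, re_inner_apply_self_eq_zero_of_skew hS, neg_zero, re_ofReal_mul, mul_eq_zero,
      or_iff_right hk] at h'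
  rw [re_inner_add_sub_self, sub_eq_zero] at hre
  exact (sq_eq_sq₀ (norm_nonneg _) (norm_nonneg _)).1 hre

end SkewAdjoint

lemma div_pow_mul_natCeil_le_exp_neg {k : ℝ} (hk : 1 ≤ k) (m : ℕ) :
    ((k - 1) / (k + 1)) ^ (m * ⌈k⌉₊) ≤ Real.exp (-m) := by
  have hk1 : 0 < k + 1 := by linarith
  have hr : (k - 1) / (k + 1) ≤ Real.exp (-(2 / (k + 1))) := by
    have : (k - 1) / (k + 1) = -(2 / (k + 1)) + 1 := by field_simp; ring
    exact this ▸ Real.add_one_le_exp _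
  have hceil : k + 1 ≤ 2 * ⌈k⌉₊ := by
    have hle : k ≤ ⌈k⌉₊ := Nat.le_ceil k
    have hone : (1 : ℝ) ≤ ⌈k⌉₊ := by exact_mod_cast Nat.one_le_ceil_iff.2 (by linarith)
    linarith
  calc ((k - 1) / (k + 1)) ^ (m * ⌈k⌉₊)
      ≤ Real.exp (-(2 / (k + 1))) ^ (m * ⌈k⌉₊) := by gcongr
    _ = Real.exp (-m * (2 * ⌈k⌉₊ / (k + 1))) := by
        rw [← Real.exp_nat_mul]; push_cast; ring_nf
    _ ≤ Real.exp (-m) := by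
        gcongr
        rw [neg_mul, neg_le_neg_iff]
        exact le_mul_of_one_le_right m.cast_nonneg ((one_le_div hk1).2 hceil)

theorem hss_error_after_mk_steps_general
    {H : Type*} [NormedAddCommGroup H] [InnerProductSpace ℂ H]
    (S : H →ₗ[ℂ] H)
    (hS : ∀ x y : H, (inner ℂ (S x) y : ℂ) = - inner ℂ x (S y))
    (k : ℝ) (hk : 1 ≤ k)
    (T : H →ₗ[ℂ] H)
    (hT1 : ((k : ℂ) • (LinearMap.id : H →ₗ[ℂ] H) + S) ∘ₗ T = LinearMap.id)
    (e : ℕ → H)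
    (hrec : ∀ n, e (n+1) = (((k - 1)/(k + 1) : ℝ) : ℂ) • T ((k : ℂ) • e n - S (e n)))
    (m : ℕ) :
    ‖e (m * ⌈k⌉₊)‖ ≤ Real.exp (-(m : ℝ)) * ‖e 0‖ := by
  have hr : 0 ≤ (k - 1) / (k + 1) := div_nonneg (by linarith) (by linarith)
  have hstep (n : ℕ) : ‖e (n + 1)‖ = (k - 1) / (k + 1) * ‖e n‖ := by
    have hcayley := LinearMap.congr_fun hT1 ((k : ℂ) • e n - S (e n))
    simp only [LinearMap.comp_apply, LinearMap.add_apply, LinearMap.smul_apply,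
      LinearMap.id_apply] at hcayley
    rw [hrec, norm_smul, Complex.norm_real, Real.norm_of_nonneg hr,
      norm_eq_of_smul_add_apply_eq_smul_sub_apply hS (by positivity) hcayley]
  calc ‖e (m * ⌈k⌉₊)‖ ≤ ((k - 1) / (k + 1)) ^ (m * ⌈k⌉₊) * ‖e 0‖ :=
        le_geom (u := fun n => ‖e n‖) hr _ fun n _ => (hstep n).le
    _ ≤ Real.exp (-m) * ‖e 0‖ := by gcongr; exact div_pow_mul_natCeil_le_exp_neg hk m

theorem hss_error_after_mk_steps
    {H : Type*} [NormedAddCommGroup H] [InnerProductSpace ℂ H]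
    [FiniteDimensional ℂ H]
    (S : H →ₗ[ℂ] H)
    (hS : ∀ x y : H, (inner ℂ (S x) y : ℂ) = - inner ℂ x (S y))
    (k : ℝ) (hk : 1 ≤ k)
    (T : H →ₗ[ℂ] H)
    (hT1 : ((k : ℂ) • (LinearMap.id : H →ₗ[ℂ] H) + S) ∘ₗ T = LinearMap.id)
    (hT2 : T ∘ₗ ((k : ℂ) • (LinearMap.id : H →ₗ[ℂ] H) + S) = LinearMap.id)
    (e : ℕ → H)
    (hrec : ∀ n, e (n+1) = (((k - 1)/(k + 1) : ℝ) : ℂ) • T ((k : ℂ) • e n - S (e n)))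
    (m : ℕ) (hm : 0 < m) :
    ‖e (m * ⌈k⌉₊)‖ ≤ Real.exp (-(m : ℝ)) * ‖e 0‖ :=
  hss_error_after_mk_steps_general S hS k hk T hT1 e hrec m
end

section
/- Let H be a finite-dimensional complex Hilbert space, S : H → H skew-adjoint, k > 1 real, and b ∈ H. Then the fixed-point iteration U_{n+1} = ((k-1)/(k+1)) (kI+S)⁻¹(kI-S) U_n + (2k/(k+1)) (kI+S)⁻¹ b has a unique fixed point U*, and U* satisfies (I + S) U* = b. -/
/-!
Applying `k • id + S` to the fixed-point equation and multiplying by `k + 1` turns it into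
`2k • b = 2k • (U + S U)`, so fixed points are exactly the solutions of `(id + S) U = b`.
If `z + S z = 0`, skew-adjointness gives `⟪z, z⟫ = -⟪z, z⟫`, so `id + S` is injective; in finite
dimension it is therefore bijective, which gives existence and uniqueness.
-/

theorem LinearMap.injective_id_add_of_skew {𝕜 E : Type*} [RCLike 𝕜] [NormedAddCommGroup E]
    [InnerProductSpace 𝕜 E] (S : E →ₗ[𝕜] E)
    (hS : ∀ x y : E, inner 𝕜 (S x) y = -inner 𝕜 x (S y)) :
    Function.Injective (LinearMap.id + S : E →ₗ[𝕜] E) := by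
  refine (injective_iff_map_eq_zero _).mpr fun z hz => ?_
  have hSz : S z = -z := eq_neg_of_add_eq_zero_right hz
  have h := hS z z
  rw [hSz, inner_neg_left, inner_neg_right, neg_neg, eq_comm, self_eq_neg] at h
  exact inner_self_eq_zero.mp h

theorem smul_sub_add_smul_eq_iff {𝕜 V : Type*} [Field 𝕜] [CharZero 𝕜] [AddCommGroup V]
    [Module 𝕜 V] (k : 𝕜) (hk0 : k ≠ 0) (hk1 : k + 1 ≠ 0) (b U W : V) :
    ((k - 1) / (k + 1)) • (k • U - W) + (2 * k / (k + 1)) • b = k • U + W ↔ U + W = b := by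
  have hd : 2 * k / (k + 1) ≠ 0 := div_ne_zero (mul_ne_zero two_ne_zero hk0) hk1
  have hcoefU : k * (1 - (k - 1) / (k + 1)) = 2 * k / (k + 1) := by field_simp; ring
  have hcoefW : 1 + (k - 1) / (k + 1) = 2 * k / (k + 1) := by field_simp; ring
  have hrest : k • U + W - ((k - 1) / (k + 1)) • (k • U - W) = (2 * k / (k + 1)) • (U + W) := by
    rw [smul_add]; nth_rw 1 [← hcoefU]; rw [← hcoefW]; module
  rw [← eq_sub_iff_add_eq', hrest, (smul_right_injective V hd).eq_iff, eq_comm]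

theorem hss_fixed_point
    {H : Type*} [NormedAddCommGroup H] [InnerProductSpace ℂ H]
    [FiniteDimensional ℂ H]
    (S : H →ₗ[ℂ] H)
    (hS : ∀ x y : H, (inner ℂ (S x) y : ℂ) = - inner ℂ x (S y))
    (k : ℝ) (hk : 1 < k)
    (T : H →ₗ[ℂ] H)
    (hT1 : ((k : ℂ) • (LinearMap.id : H →ₗ[ℂ] H) + S) ∘ₗ T = LinearMap.id)
    (hT2 : T ∘ₗ ((k : ℂ) • (LinearMap.id : H →ₗ[ℂ] H) + S) = LinearMap.id)
    (b : H) :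
    (∃! U : H,
      (((k - 1)/(k + 1) : ℝ) : ℂ) • T ((k : ℂ) • U - S U)
        + ((2 * k / (k + 1) : ℝ) : ℂ) • T b = U) ∧
    (∀ U : H,
      (((k - 1)/(k + 1) : ℝ) : ℂ) • T ((k : ℂ) • U - S U)
        + ((2 * k / (k + 1) : ℝ) : ℂ) • T b = U → U + S U = b) := by
  let A : H ≃ₗ[ℂ] H := LinearEquiv.ofLinearMap _ T hT1 hT2
  have hk0 : (k : ℂ) ≠ 0 := by exact_mod_cast (by linarith : k ≠ 0)
  have hk1 : (k : ℂ) + 1 ≠ 0 := by exact_mod_cast (by linarith : k + 1 ≠ 0)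
  have isFixedPoint_iff : ∀ U : H, (((k - 1)/(k + 1) : ℝ) : ℂ) • T ((k : ℂ) • U - S U)
      + ((2 * k / (k + 1) : ℝ) : ℂ) • T b = U ↔ U + S U = b := by
    intro U
    rw [← map_smul, ← map_smul, ← map_add]
    change A.symm _ = U ↔ _
    rw [A.symm_apply_eq]
    push_cast
    exact smul_sub_add_smul_eq_iff _ hk0 hk1 b U (S U)
  have hinj := S.injective_id_add_of_skew hS
  have hbij : Function.Bijective (LinearMap.id + S : H →ₗ[ℂ] H) :=
    ⟨hinj, LinearMap.injective_iff_surjective.mp hinj⟩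
  exact ⟨(existsUnique_congr isFixedPoint_iff).mpr (hbij.existsUnique b), fun U => (isFixedPoint_iff U).mp⟩
end
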